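/- Let μ be the uniform (Lebesgue) probability measure on S^1 and ν any probability measure on S^1. For the quadratic cost h(x)=|x|², the unique minimizer of α ↦ ∫₀¹ |F_μ^{-1}(x) − F_ν^{-1}(x−α)|² dx is α_{μ,ν} = 𝔼(ν) − 1/2, where 𝔼(ν) = ∫₀¹ x dν(x). -/

import Mathlib

open MeasureTheory Set

noncomputable section

/-- Geodesic distance on the circle `ℝ/ℤ`, for representatives `x, y ∈ ℝ`:
`|x - y|_{S¹} = min_{k ∈ ℤ} |x - y + k|`. -/
def circleDist (x y : ℝ) : ℝ := ⨅ k : ℤ, |x - y + (k : ℝ)|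

/-- The CDF of a circular probability measure (represented as a probability measure on `ℝ`
supported on `[0,1)`), extended to all of `ℝ` by `F(y + n) = F(y) + n`. -/
def cdf (μ : Measure ℝ) (y : ℝ) : ℝ := (μ (Ico 0 (Int.fract y))).toReal + (⌊y⌋ : ℝ)

/-- The quantile function `F_μ⁻¹(y) := inf {x | F_μ(x) > y}`. -/
def quantile (μ : Measure ℝ) (y : ℝ) : ℝ := sInf {x : ℝ | cdf μ x > y}

/-- The CDF with respect to a reference (cutting) point `x₀`:
`F_{μ,x₀}(y) := F_μ(x₀ + y) - F_μ(x₀)`. -/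
def cdfCut (μ : Measure ℝ) (x₀ y : ℝ) : ℝ := cdf μ (x₀ + y) - cdf μ x₀

/-- The quantile of the cut CDF: `F_{μ,x₀}⁻¹(y) := inf {x | F_{μ,x₀}(x) > y}`. -/
def quantileCut (μ : Measure ℝ) (x₀ y : ℝ) : ℝ := sInf {x : ℝ | cdfCut μ x₀ x > y}

/-- The circular optimal transport cost `COT_h(μ,ν)` with ground cost `h (|x - y|_{S¹})`,
the infimum over all couplings of `μ` and `ν`. -/
def COT (h : ℝ → ℝ) (μ ν : Measure ℝ) : ℝ :=
  sInf {c : ℝ | ∃ γ : Measure (ℝ × ℝ), IsProbabilityMeasure γ ∧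
    γ.map Prod.fst = μ ∧ γ.map Prod.snd = ν ∧
    c = ∫ p, h (circleDist p.1 p.2) ∂γ}

/-- The transport cost associated with cutting the circle at `x₀`:
`∫₀¹ h(|F_{μ,x₀}⁻¹(x) - F_{ν,x₀}⁻¹(x)|) dx`. -/
def cutCost (h : ℝ → ℝ) (μ ν : Measure ℝ) (x₀ : ℝ) : ℝ :=
  ∫ x in (0:ℝ)..1, h |quantileCut μ x₀ x - quantileCut ν x₀ x|

/-- The transport cost associated with a shift `α`:
`∫₀¹ h(|F_μ⁻¹(x) - F_ν⁻¹(x - α)|) dx`. -/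
def shiftCost (h : ℝ → ℝ) (μ ν : Measure ℝ) (α : ℝ) : ℝ :=
  ∫ x in (0:ℝ)..1, h |quantile μ x - quantile ν (x - α)|

/-- The circular Monge map determined by a cutting point `x_cut`:
`M_μ^ν(x) := F_{ν,x_cut}⁻¹(F_{μ,x_cut}(x - x_cut)) + x_cut`. -/
def mongeMap (μ ν : Measure ℝ) (xcut : ℝ) (x : ℝ) : ℝ :=
  quantileCut ν xcut (cdfCut μ xcut (x - xcut)) + xcut

/-- The LCOT embedding of `ν` with respect to the reference `μ` and shift `α`:
`ν̂(x) := F_ν⁻¹(F_μ(x) - α) - x`. -/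
def lcotEmbed (μ ν : Measure ℝ) (α : ℝ) (x : ℝ) : ℝ :=
  quantile ν (cdf μ x - α) - x

/-!
With `g t := F_ν⁻¹ t - t`, which is `1`-periodic and bounded, the cost is
`∫₀¹ (α - g (x - α))² dx = ∫₀¹ (α - g)²`, a quadratic in `α` minimized exactly at `α = ∫₀¹ g`.
Since `F_ν⁻¹` pushes Lebesgue measure on `[0,1)` forward to `ν`, `∫₀¹ F_ν⁻¹ = 𝔼(ν)`, whence
`∫₀¹ g = 𝔼(ν) - 1/2`.
-/

open Filter Topology

lemma exists_mem_Ioo_lt_measureReal_Iio {α : Type*} [LinearOrder α] [TopologicalSpace α]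
    [OrderTopology α] [DenselyOrdered α] [FirstCountableTopology α] [MeasurableSpace α]
    {μ : Measure α} [IsFiniteMeasure μ] {r : ℝ} {y z : α} (hyz : y < z)
    (h : r < μ.real (Iio z)) : ∃ s ∈ Ioo y z, r < μ.real (Iio s) := by
  obtain ⟨u, hu_mono, hu_mem, hu_lim⟩ := exists_seq_strictMono_tendsto' hyz
  have hunion : ⋃ n, Iio (u n) = Iio z :=
    (isLUB_of_tendsto_atTop hu_mono.monotone hu_lim).iUnion_Iio_eq
  have hlim : Tendsto (fun n => μ.real (Iio (u n))) atTop (𝓝 (μ.real (Iio z))) := by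
    rw [← hunion]
    exact (ENNReal.tendsto_toReal (measure_ne_top _ _)).comp
      (tendsto_measure_iUnion_atTop fun _ _ hmn => Iio_subset_Iio (hu_mono.monotone hmn))
  obtain ⟨n, hn⟩ := (hlim.eventually_const_lt h).exists
  exact ⟨u n, hu_mem n, hn⟩

lemma MeasureTheory.Measure.ext_of_Iio {α : Type*} [TopologicalSpace α] [MeasurableSpace α]
    [SecondCountableTopology α] [LinearOrder α] [OrderTopology α] [BorelSpace α]
    (μ ν : Measure α) [IsProbabilityMeasure μ] [IsProbabilityMeasure ν]
    (h : ∀ a, μ (Iio a) = ν (Iio a)) : μ = ν :=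
  ext_of_Ici μ ν fun a => by
    rw [← compl_Iio, prob_compl_eq_one_sub measurableSet_Iio,
      prob_compl_eq_one_sub measurableSet_Iio, h]

lemma Function.Periodic.intervalIntegral_comp_sub_eq {E : Type*} [NormedAddCommGroup E]
    [NormedSpace ℝ E] {f : ℝ → E} {T : ℝ} (hf : Function.Periodic f T) (α : ℝ) :
    ∫ x in (0 : ℝ)..T, f (x - α) = ∫ x in (0 : ℝ)..T, f x := by
  rw [intervalIntegral.integral_comp_sub_right, zero_sub, sub_eq_neg_add,
    hf.intervalIntegral_add_eq (-α) 0, zero_add]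

lemma Measurable.intervalIntegrable_of_abs_le {f : ℝ → ℝ} {C : ℝ} (hf : Measurable f)
    (hC : ∀ x, |f x| ≤ C) (a b : ℝ) : IntervalIntegrable f volume a b :=
  (intervalIntegrable_const (c := C)).mono_fun hf.aestronglyMeasurable
    (ae_of_all _ fun x => by simpa using (hC x).trans (le_abs_self C))

lemma intervalIntegral_sub_sq_eq {g : ℝ → ℝ} (hg : IntervalIntegrable g volume 0 1)
    (hg2 : IntervalIntegrable (fun x => g x ^ 2) volume 0 1) (α : ℝ) :
    ∫ x in (0 : ℝ)..1, (α - g x) ^ 2 = (α - ∫ x in (0 : ℝ)..1, g x) ^ 2 +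
      ((∫ x in (0 : ℝ)..1, g x ^ 2) - (∫ x in (0 : ℝ)..1, g x) ^ 2) := by
  have hexpand : (fun x => (α - g x) ^ 2) = fun x => (α ^ 2 - 2 * α * g x) + g x ^ 2 := by
    ext x; ring
  rw [hexpand, intervalIntegral.integral_add (intervalIntegrable_const.sub (hg.const_mul _)) hg2,
    intervalIntegral.integral_sub intervalIntegrable_const (hg.const_mul _),
    intervalIntegral.integral_const_mul, intervalIntegral.integral_const]
  simp only [sub_zero, one_smul]
  ring

section Cdf

variable {ν : Measure ℝ}

lemma floor_le_cdf (y : ℝ) : (⌊y⌋ : ℝ) ≤ cdf ν y :=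
  le_add_of_nonneg_left ENNReal.toReal_nonneg

lemma cdf_le_floor_add_one [IsProbabilityMeasure ν] (y : ℝ) : cdf ν y ≤ ⌊y⌋ + 1 := by
  rw [cdf, add_comm]
  gcongr
  exact ENNReal.toReal_le_of_le_ofReal zero_le_one (by simpa using prob_le_one)

lemma cdf_intCast (n : ℤ) : cdf ν n = n := by
  simp [cdf]

lemma cdf_zero : cdf ν 0 = 0 := by
  simpa using cdf_intCast (ν := ν) 0

lemma cdf_one : cdf ν 1 = 1 := by
  simpa using cdf_intCast (ν := ν) 1

lemma cdf_add_one (y : ℝ) : cdf ν (y + 1) = cdf ν y + 1 := by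
  rw [cdf, cdf, Int.fract_add_one, Int.floor_add_one]
  push_cast
  ring

lemma lt_cdf_add_one (t : ℝ) : t < cdf ν (t + 1) := by
  linarith [floor_le_cdf (ν := ν) (t + 1), Int.lt_floor_add_one (t + 1)]

lemma monotone_cdf [IsProbabilityMeasure ν] : Monotone (cdf ν) := by
  intro a b hab
  rcases (Int.floor_le_floor hab).lt_or_eq with hlt | heq
  · calc cdf ν a ≤ ⌊a⌋ + 1 := cdf_le_floor_add_one a
      _ ≤ ⌊b⌋ := by exact_mod_cast hlt
      _ ≤ cdf ν b := floor_le_cdf b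
  · have hfract : Int.fract a ≤ Int.fract b := by
      rw [Int.fract, Int.fract, heq]; linarith
    rw [cdf, cdf, heq]
    gcongr
    exact measure_ne_top ν _

end Cdf

section Quantile

variable {ν : Measure ℝ} [IsProbabilityMeasure ν]

lemma bddBelow_setOf_lt_cdf (t : ℝ) : BddBelow {x | cdf ν x > t} := by
  refine ⟨t - 1, fun x (hx : t < cdf ν x) => ?_⟩
  linarith [cdf_le_floor_add_one (ν := ν) x, Int.floor_le x]

lemma quantile_le_add_one (t : ℝ) : quantile ν t ≤ t + 1 :=
  csInf_le (bddBelow_setOf_lt_cdf t) (lt_cdf_add_one t)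

lemma sub_one_le_quantile (t : ℝ) : t - 1 ≤ quantile ν t :=
  le_csInf ⟨t + 1, lt_cdf_add_one t⟩ fun x (hx : t < cdf ν x) => by
    linarith [cdf_le_floor_add_one (ν := ν) x, Int.floor_le x]

lemma abs_quantile_sub_le (t : ℝ) : |quantile ν t - t| ≤ 1 :=
  abs_sub_le_iff.2 ⟨by linarith [quantile_le_add_one (ν := ν) t],
    by linarith [sub_one_le_quantile (ν := ν) t]⟩

lemma monotone_quantile : Monotone (quantile ν) := fun s t hst =>
  csInf_le_csInf (bddBelow_setOf_lt_cdf s) ⟨t + 1, lt_cdf_add_one t⟩ fun _ hx =>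
    lt_of_le_of_lt hst hx

end Quantile

instance : IsProbabilityMeasure (volume.restrict (Ico (0 : ℝ) 1)) := ⟨by simp⟩

lemma volume_restrict_Ico_Iio (c : ℝ) :
    volume.restrict (Ico 0 1) (Iio c) = ENNReal.ofReal (min c 1) := by
  have : Iio c ∩ Ico 0 1 = Ico 0 (min c 1) := by
    ext t
    simp only [mem_inter_iff, mem_Iio, mem_Ico, lt_min_iff]
    tauto
  rw [Measure.restrict_apply measurableSet_Iio, this, Real.volume_Ico, sub_zero]

lemma cdf_volume_restrict_Ico (y : ℝ) : cdf (volume.restrict (Ico 0 1)) y = y := by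
  rw [cdf, Measure.restrict_apply measurableSet_Ico,
    inter_eq_self_of_subset_left (Ico_subset_Ico_right (Int.fract_lt_one y).le), Real.volume_Ico,
    sub_zero, ENNReal.toReal_ofReal (Int.fract_nonneg y), Int.fract_add_floor]

lemma quantile_volume_restrict_Ico (x : ℝ) : quantile (volume.restrict (Ico 0 1)) x = x := by
  have : {y | cdf (volume.restrict (Ico 0 1)) y > x} = Ioi x := by
    ext y
    simp [cdf_volume_restrict_Ico]
  rw [quantile, this, csInf_Ioi]

section SupportedOnUnitInterval

variable {ν : Measure ℝ} [IsProbabilityMeasure ν]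

lemma measure_Iio_zero_eq_zero (hν : ν (Ico 0 1) = 1) : ν (Iio 0) = 0 :=
  measure_mono_null (show Iio 0 ⊆ (Ico 0 1)ᶜ from fun _ hx hx' => not_le.2 hx hx'.1)
    ((prob_compl_eq_zero_iff measurableSet_Ico).2 hν)

lemma measure_Iio_eq_measure_Ico (hν : ν (Ico 0 1) = 1) (s : ℝ) :
    ν (Iio s) = ν (Ico 0 s) := by
  refine le_antisymm ?_ (measure_mono Ico_subset_Iio_self)
  calc ν (Iio s) ≤ ν (Iio 0 ∪ Ico 0 s) := measure_mono Iio_subset_Iio_union_Ico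
    _ ≤ ν (Iio 0) + ν (Ico 0 s) := measure_union_le _ _
    _ = ν (Ico 0 s) := by rw [measure_Iio_zero_eq_zero hν, zero_add]

lemma measure_Iio_eq_one (hν : ν (Ico 0 1) = 1) {s : ℝ} (hs : 1 ≤ s) : ν (Iio s) = 1 :=
  le_antisymm prob_le_one (hν ▸ measure_mono (Ico_subset_Iio_self.trans (Iio_subset_Iio hs)))

lemma cdf_eq_measureReal_Iio (hν : ν (Ico 0 1) = 1) {m : ℤ} {y : ℝ} (hmy : m ≤ y)
    (hym : y ≤ m + 1) : cdf ν y = ν.real (Iio (y - m)) + m := by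
  rcases hym.lt_or_eq with hym | rfl
  · have hfloor : ⌊y⌋ = m := Int.floor_eq_iff.2 ⟨hmy, hym⟩
    rw [cdf, ← Int.self_sub_floor, hfloor, measureReal_def, measure_Iio_eq_measure_Ico hν]
  · rw [cdf_add_one, cdf_intCast, add_sub_cancel_left, measureReal_def,
      measure_Iio_eq_one hν le_rfl, ENNReal.toReal_one, add_comm]

lemma exists_lt_lt_cdf (hν : ν (Ico 0 1) = 1) {t x : ℝ} (h : t < cdf ν x) :
    ∃ y < x, t < cdf ν y := by
  set m := ⌈x⌉ - 1
  have hmx : (m : ℝ) < x := by push_cast [m]; linarith [Int.ceil_lt_add_one x]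
  have hxm : x ≤ m + 1 := by push_cast [m]; linarith [Int.le_ceil x]
  rw [cdf_eq_measureReal_Iio hν hmx.le hxm] at h
  obtain ⟨s, ⟨hs0, hsx⟩, hs⟩ :=
    exists_mem_Ioo_lt_measureReal_Iio (sub_pos.2 hmx) (show t - m < _ by linarith)
  refine ⟨s + m, by linarith, ?_⟩
  rw [cdf_eq_measureReal_Iio hν (by linarith) (by linarith), add_sub_cancel_right]
  linarith

lemma quantile_lt_iff (hν : ν (Ico 0 1) = 1) {t x : ℝ} :
    quantile ν t < x ↔ t < cdf ν x := by
  refine ⟨fun h => ?_, fun h => ?_⟩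
  · obtain ⟨y, hy, hyx⟩ := exists_lt_of_csInf_lt ⟨t + 1, lt_cdf_add_one t⟩ h
    exact lt_of_lt_of_le hy (monotone_cdf hyx.le)
  · obtain ⟨y, hyx, hty⟩ := exists_lt_lt_cdf hν h
    exact (csInf_le (bddBelow_setOf_lt_cdf t) hty).trans_lt hyx

lemma quantile_add_one (hν : ν (Ico 0 1) = 1) (t : ℝ) :
    quantile ν (t + 1) = quantile ν t + 1 :=
  eq_of_forall_gt_iff fun c => by
    have hcdf := cdf_add_one (ν := ν) (c - 1)
    rw [sub_add_cancel] at hcdf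
    rw [quantile_lt_iff hν, ← lt_sub_iff_add_lt, ← lt_sub_iff_add_lt, quantile_lt_iff hν,
      hcdf, add_sub_cancel_right]

lemma periodic_quantile_sub (hν : ν (Ico 0 1) = 1) :
    Function.Periodic (fun t => quantile ν t - t) 1 := fun t => by
  simp only [quantile_add_one hν]
  ring

lemma ofReal_min_cdf_one (hν : ν (Ico 0 1) = 1) (x : ℝ) :
    ENNReal.ofReal (min (cdf ν x) 1) = ν (Iio x) := by
  rcases le_total x 0 with hx0 | hx0
  · have hcdf : cdf ν x ≤ 0 := (monotone_cdf hx0).trans_eq cdf_zero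
    rw [ENNReal.ofReal_eq_zero.2 ((min_le_left _ _).trans hcdf), eq_comm]
    exact measure_mono_null (Iio_subset_Iio hx0) (measure_Iio_zero_eq_zero hν)
  rcases le_total x 1 with hx1 | hx1
  · have hcdf := cdf_eq_measureReal_Iio hν (m := 0) (by simpa using hx0) (by simpa using hx1)
    rw [Int.cast_zero, sub_zero, add_zero] at hcdf
    rw [hcdf, min_eq_left measureReal_le_one, measureReal_def,
      ENNReal.ofReal_toReal (measure_ne_top _ _)]
  · have hcdf : 1 ≤ cdf ν x := cdf_one (ν := ν) ▸ monotone_cdf hx1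
    rw [min_eq_right hcdf, measure_Iio_eq_one hν hx1, ENNReal.ofReal_one]

lemma preimage_quantile_Iio (hν : ν (Ico 0 1) = 1) (x : ℝ) :
    quantile ν ⁻¹' Iio x = Iio (cdf ν x) :=
  ext fun _ => quantile_lt_iff hν

lemma map_quantile (hν : ν (Ico 0 1) = 1) :
    (volume.restrict (Ico 0 1)).map (quantile ν) = ν := by
  have hmeas : Measurable (quantile ν) := monotone_quantile.measurable
  have := Measure.isProbabilityMeasure_map (μ := volume.restrict (Ico (0 : ℝ) 1))
    hmeas.aemeasurable
  refine Measure.ext_of_Iio _ _ fun x => ?_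
  rw [Measure.map_apply hmeas measurableSet_Iio, preimage_quantile_Iio hν,
    volume_restrict_Ico_Iio, ofReal_min_cdf_one hν]

lemma integral_quantile (hν : ν (Ico 0 1) = 1) :
    ∫ t in (0 : ℝ)..1, quantile ν t = ∫ x in Ico (0 : ℝ) 1, x ∂ν := by
  have hsupp : ν.restrict (Ico 0 1) = ν := Measure.restrict_eq_self_of_ae_mem <|
    mem_ae_iff.2 ((prob_compl_eq_zero_iff measurableSet_Ico).2 hν)
  rw [intervalIntegral.integral_of_le zero_le_one, integral_Ioc_eq_integral_Ioo,
    ← integral_Ico_eq_integral_Ioo, hsupp]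
  conv_rhs => rw [← map_quantile hν]
  exact (integral_map monotone_quantile.measurable.aemeasurable aestronglyMeasurable_id).symm

end SupportedOnUnitInterval

theorem exists_integral_sq_shift_eq {ν : Measure ℝ} [IsProbabilityMeasure ν]
    (hν : ν (Ico 0 1) = 1) : ∃ c, ∀ α : ℝ,
      ∫ x in (0 : ℝ)..1, |quantile (volume.restrict (Ico 0 1)) x - quantile ν (x - α)| ^ 2 =
        (α - (∫ x in Ico (0 : ℝ) 1, x ∂ν - 1 / 2)) ^ 2 + c := by
  set g : ℝ → ℝ := fun t => quantile ν t - t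
  have hg_meas : Measurable g := monotone_quantile.measurable.sub measurable_id
  have hg_int := hg_meas.intervalIntegrable_of_abs_le (abs_quantile_sub_le (ν := ν)) 0 1
  have hg2_int := (hg_meas.pow_const 2).intervalIntegrable_of_abs_le (C := 1)
    (fun t => by rw [abs_pow]; exact pow_le_one₀ (abs_nonneg _) (abs_quantile_sub_le t)) 0 1
  have hmean : ∫ x in (0 : ℝ)..1, g x = ∫ x in Ico (0 : ℝ) 1, x ∂ν - 1 / 2 := by
    rw [intervalIntegral.integral_sub monotone_quantile.intervalIntegrable
      intervalIntegral.intervalIntegrable_id, integral_quantile hν, integral_id]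
    norm_num
  refine ⟨(∫ x in (0 : ℝ)..1, g x ^ 2) - (∫ x in (0 : ℝ)..1, g x) ^ 2, fun α => ?_⟩
  calc ∫ x in (0 : ℝ)..1, |quantile (volume.restrict (Ico 0 1)) x - quantile ν (x - α)| ^ 2
      = ∫ x in (0 : ℝ)..1, (α - g (x - α)) ^ 2 :=
        intervalIntegral.integral_congr fun x _ => by
          simp only [quantile_volume_restrict_Ico, sq_abs, g]
          ring
    _ = ∫ x in (0 : ℝ)..1, (α - g x) ^ 2 :=
        ((periodic_quantile_sub hν).comp fun r => (α - r) ^ 2).intervalIntegral_comp_sub_eq α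
    _ = _ := by rw [intervalIntegral_sub_sq_eq hg_int hg2_int, hmean]

/-- For the uniform reference `μ` and quadratic cost, the unique minimizer of
`α ↦ ∫₀¹ |F_μ⁻¹(x) - F_ν⁻¹(x - α)|² dx` is `α_{μ,ν} = 𝔼(ν) - 1/2`. -/
theorem quadratic_shift_minimizer_uniform
    (ν : Measure ℝ) [IsProbabilityMeasure ν] (hν : ν (Ico 0 1) = 1) :
    letI unif : Measure ℝ := volume.restrict (Ico 0 1)
    letI f : ℝ → ℝ := fun α =>
      ∫ x in (0:ℝ)..1, |quantile unif x - quantile ν (x - α)| ^ 2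
    letI Eν : ℝ := ∫ x in Ico (0:ℝ) 1, x ∂ν
    (∀ α : ℝ, f (Eν - 1/2) ≤ f α) ∧
    (∀ α : ℝ, (∀ β : ℝ, f α ≤ f β) → α = Eν - 1/2) := by
  obtain ⟨c, hc⟩ := exists_integral_sq_shift_eq hν
  beta_reduce
  set E := ∫ x in Ico (0 : ℝ) 1, x ∂ν
  refine ⟨fun α => ?_, fun α hα => ?_⟩
  · rw [hc, hc, sub_self]
    nlinarith [sq_nonneg (α - (E - 1 / 2))]
  · have hmin := hα (E - 1 / 2)
    rw [hc, hc, sub_self] at hmin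
    nlinarith [sq_nonneg (α - (E - 1 / 2))]
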